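/- For integers M ≥ 2 and h ≥ 1 with M sufficiently large, the total number of walks of length L = M^(2h+1) in the exchange graph on M! permutations with maximum degree d < M^(2h)/2^h is strictly less than (M!/2^h) · M^(2h·M^(2h+1)), and consequently strictly less than L! , so in expectation (over a uniformly random assignment of distinct values to the permutations) no walk of length L is strictly decreasing. -/

import Mathlib

open scoped Classical

/-- The exchange graph on permutations of `Fin M`: two permutations are adjacent
if one is obtained from the other by applying `h` successive transpositions. -/
def exchangeGraph (M h : ℕ) : SimpleGraph (Equiv.Perm (Fin M)) :=
  SimpleGraph.fromRel (fun σ τ => ∃ l : List (Equiv.Perm (Fin M)),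
    l.length = h ∧ (∀ t ∈ l, ∃ i j : Fin M, i ≠ j ∧ t = Equiv.swap i j) ∧ τ = σ * l.prod)

private lemma walk_count_le' {V : Type*} [Fintype V] [DecidableEq V] (G : SimpleGraph V)
    (d : ℕ) (hd : ∀ v : V, (G.neighborSet v).ncard ≤ d) :
    ∀ n : ℕ, (Finset.univ.filter (fun p : Fin (n + 1) → V =>
        ∀ i : Fin n, G.Adj (p i.castSucc) (p i.succ))).card ≤ Fintype.card V * d ^ n := by
  intro n
  induction n with
  | zero =>
      have : (Finset.univ.filter (fun p : Fin 1 → V =>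
          ∀ i : Fin 0, G.Adj (p i.castSucc) (p i.succ))) = Finset.univ := by
        apply Finset.filter_true_of_mem
        exact fun p _ i => i.elim0
      rw [this, Finset.card_univ, pow_zero, mul_one]
      simp [Fintype.card_fun]
  | succ n ih =>
      set s := Finset.univ.filter (fun p : Fin (n + 2) → V =>
        ∀ i : Fin (n + 1), G.Adj (p i.castSucc) (p i.succ)) with hs
      set r : (Fin (n + 2) → V) → (Fin (n + 1) → V) := fun p => p ∘ Fin.castSucc with hr
      have hfiber : ∀ a ∈ s.image r, (s.filter fun p => r p = a).card ≤ d := by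
        intro a _
        have hmem : ∀ p ∈ s.filter (fun p => r p = a),
            p (Fin.last (n + 1)) ∈ (G.neighborSet (a (Fin.last n))).toFinset := by
          intro p hp
          rw [Finset.mem_filter] at hp
          obtain ⟨hps, hpa⟩ := hp
          rw [hs, Finset.mem_filter] at hps
          have hadj := hps.2 (Fin.last n)
          rw [Set.mem_toFinset]
          have ha : a (Fin.last n) = p ((Fin.last n).castSucc) := by
            rw [← hpa]; rfl
          rw [ha]
          have : (Fin.last n).succ = Fin.last (n + 1) := Fin.succ_last n
          rw [← this]
          exact hadj
        have hinj : Set.InjOn (fun p => p (Fin.last (n + 1)))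
            ((s.filter fun p => r p = a : Finset (Fin (n + 2) → V)) : Set (Fin (n + 2) → V)) := by
          intro p1 h1 p2 h2 he
          simp only [Finset.coe_filter, Set.mem_setOf_eq] at h1 h2
          funext i
          refine Fin.lastCases ?_ ?_ i
          · exact he
          · intro j
            have := congrFun (h1.2.trans h2.2.symm) j
            exact this
        calc (s.filter fun p => r p = a).card
            ≤ ((G.neighborSet (a (Fin.last n))).toFinset).card :=
              Finset.card_le_card_of_injOn _ hmem hinj
          _ ≤ d := by rw [← Set.ncard_eq_toFinset_card']; exact hd _
      have h1 : s.card ≤ d * (s.image r).card := Finset.card_le_mul_card_image s d hfiber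
      have h2 : s.image r ⊆ Finset.univ.filter (fun p : Fin (n + 1) → V =>
          ∀ i : Fin n, G.Adj (p i.castSucc) (p i.succ)) := by
        intro a ha
        rw [Finset.mem_image] at ha
        obtain ⟨p, hp, rfl⟩ := ha
        rw [hs, Finset.mem_filter] at hp
        rw [Finset.mem_filter]
        refine ⟨Finset.mem_univ _, fun i => ?_⟩
        have := hp.2 i.castSucc
        show G.Adj (p (Fin.castSucc i.castSucc)) (p (Fin.castSucc i.succ))
        rwa [← Fin.succ_castSucc]
      calc s.card ≤ d * (s.image r).card := h1
        _ ≤ d * (Fintype.card V * d ^ n) := by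
            exact Nat.mul_le_mul_left d (le_trans (Finset.card_le_card h2) ih)
        _ = Fintype.card V * d ^ (n + 1) := by ring

private lemma div_three_pow_le_factorial : ∀ n : ℕ, ((n : ℝ) / 3) ^ n ≤ n.factorial := by
  intro n
  induction n with
  | zero => simp
  | succ n ih =>
      rcases Nat.eq_zero_or_pos n with rfl | hn
      · norm_num
      · have hn' : (0 : ℝ) < n := by exact_mod_cast hn
        have key : ((n : ℝ) + 1) / 3 = ((n : ℝ) / 3) * (((n : ℝ) + 1) / n) := by
          field_simp
        have hratio : (((n : ℝ) + 1) / n) ^ n ≤ 3 := by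
          have h1 : ((n : ℝ) + 1) / n ≤ Real.exp (1 / n) := by
            rw [div_le_iff₀ hn']
            have := Real.add_one_le_exp (1 / (n : ℝ))
            calc (n : ℝ) + 1 = (1 / n + 1) * n := by field_simp; ring
              _ ≤ Real.exp (1 / n) * n := by
                  apply mul_le_mul_of_nonneg_right this (le_of_lt hn')
          have h0 : (0 : ℝ) ≤ ((n : ℝ) + 1) / n := by positivity
          calc (((n : ℝ) + 1) / n) ^ n ≤ (Real.exp (1 / n)) ^ n :=
                pow_le_pow_left₀ h0 h1 n
            _ = Real.exp (n * (1 / n)) := (Real.exp_nat_mul _ n).symm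
            _ = Real.exp 1 := by rw [mul_one_div, div_self (ne_of_gt hn')]
            _ ≤ 3 := by
                have := Real.exp_one_lt_d9
                norm_num at this ⊢
                linarith
        have hsplit : (((n : ℝ) + 1) / 3) ^ (n + 1)
            = (((n : ℝ) + 1) / 3) * (((n : ℝ) / 3) ^ n * (((n : ℝ) + 1) / n) ^ n) := by
          rw [pow_succ]
          rw [key, mul_pow]
          ring
        rw [Nat.cast_succ] at *
        rw [hsplit]
        have hfac : (0 : ℝ) ≤ ((n : ℝ) + 1) / 3 := by positivity
        calc (((n : ℝ) + 1) / 3) * (((n : ℝ) / 3) ^ n * (((n : ℝ) + 1) / n) ^ n)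
            ≤ (((n : ℝ) + 1) / 3) * ((n.factorial : ℝ) * 3) := by
              apply mul_le_mul_of_nonneg_left _ hfac
              apply mul_le_mul ih hratio (by positivity) (by positivity)
          _ = ((n : ℝ) + 1) * n.factorial := by ring
          _ = ((n + 1).factorial : ℝ) := by
              rw [Nat.factorial_succ]; push_cast; ring


private lemma strictAnti_comp_perm_eq {n : ℕ} {g₁ g₂ : Fin n → ℝ} (h₁ : StrictAnti g₁)
    (h₂ : StrictAnti g₂) {σ₁ σ₂ : Equiv.Perm (Fin n)} (hc : g₁ ∘ σ₁ = g₂ ∘ σ₂) : g₁ = g₂ := by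
  have hr : Set.range g₁ = Set.range g₂ := by
    rw [← σ₁.surjective.range_comp g₁, ← σ₂.surjective.range_comp g₂, hc]
  exact Set.range_injOn_strictAnti h₁ h₂ hr


private lemma decreasing_perm_count {V : Type*} [Fintype V] [DecidableEq V]
    (f : V → ℝ) (hf : Function.Injective f) {n : ℕ} (p : Fin n → V) :
    (Finset.univ.filter fun τ : Equiv.Perm V =>
        ∀ i j : Fin n, i < j → f (τ (p j)) < f (τ (p i))).card * n.factorial
      ≤ Fintype.card (Equiv.Perm V) := by
  set s := Finset.univ.filter fun τ : Equiv.Perm V =>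
      ∀ i j : Fin n, i < j → f (τ (p j)) < f (τ (p i)) with hs
  by_cases hp : Function.Injective p
  · set ι : Fin n ↪ V := ⟨p, hp⟩ with hι
    set F : ↥s × Equiv.Perm (Fin n) → Equiv.Perm V :=
      fun x => (x.2.viaEmbedding ι).trans (x.1 : Equiv.Perm V) with hF
    have hFinj : Function.Injective F := by
      rintro ⟨⟨τ₁, hτ₁⟩, σ₁⟩ ⟨⟨τ₂, hτ₂⟩, σ₂⟩ heq
      rw [hs, Finset.mem_filter] at hτ₁ hτ₂
      have hτ₁' := hτ₁.2
      have hτ₂' := hτ₂.2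
      set g₁ : Fin n → ℝ := fun i => f (τ₁ (p i)) with hg₁
      set g₂ : Fin n → ℝ := fun i => f (τ₂ (p i)) with hg₂
      have hga : StrictAnti g₁ := fun i j hij => hτ₁' i j hij
      have hgb : StrictAnti g₂ := fun i j hij => hτ₂' i j hij
      have happ : ∀ i : Fin n, τ₁ (p (σ₁ i)) = τ₂ (p (σ₂ i)) := by
        intro i
        have h0 := congrArg (fun e : Equiv.Perm V => e (p i)) heq
        simp only [hF, Equiv.trans_apply] at h0
        have e1 : (σ₁.viaEmbedding ι) (p i) = p (σ₁ i) := σ₁.viaEmbedding_apply ι i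
        have e2 : (σ₂.viaEmbedding ι) (p i) = p (σ₂ i) := σ₂.viaEmbedding_apply ι i
        rwa [e1, e2] at h0
      have hcomp : g₁ ∘ σ₁ = g₂ ∘ σ₂ := funext fun i => congrArg f (happ i)
      have hgeq : g₁ = g₂ := strictAnti_comp_perm_eq hga hgb hcomp
      have hσ : σ₁ = σ₂ := by
        ext i
        have h0 : g₁ (σ₁ i) = g₁ (σ₂ i) := by
          have h1 := congrFun hcomp i
          rw [← hgeq] at h1
          simpa using h1
        exact congrArg Fin.val (hga.injective h0)
      have hτ : τ₁ = τ₂ := by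
        subst hσ
        ext v
        have h0 := congrArg (fun e : Equiv.Perm V => e ((σ₁.viaEmbedding ι).symm v)) heq
        simpa [hF, Equiv.trans_apply] using h0
      simp [hτ, hσ]
    have hcard := Fintype.card_le_of_injective F hFinj
    rwa [Fintype.card_prod, Fintype.card_coe, Fintype.card_perm, Fintype.card_fin] at hcard
  · have hempty : s = ∅ := by
      rw [Function.not_injective_iff] at hp
      obtain ⟨i, j, hpij, hij⟩ := hp
      apply Finset.eq_empty_of_forall_notMem
      intro τ hτ
      rw [hs, Finset.mem_filter] at hτ
      rcases lt_or_gt_of_ne hij with hlt | hgt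
      · exact absurd (hτ.2 i j hlt) (by rw [hpij]; exact lt_irrefl _)
      · exact absurd (hτ.2 j i hgt) (by rw [hpij]; exact lt_irrefl _)
    simp [hempty]

/-- For `M` sufficiently large, in the exchange graph on the `M!` permutations with
maximum degree `d < M^(2h)/2^h`, the number of walks of length `L = M^(2h+1)` is
strictly less than `(M!/2^h)·M^(2hL)`, hence strictly less than `L!`, and so the
expected number (over a uniformly random exchangeable assignment of distinct values
to the vertices) of strictly decreasing walks of length `L` is less than `1`. -/
theorem exchangeGraph_no_decreasing_walk (h : ℕ) (hh : 1 ≤ h) :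
    ∃ M0 : ℕ, ∀ M : ℕ, M0 ≤ M → 2 ≤ M →
      ∀ d : ℕ, (∀ v : Equiv.Perm (Fin M), ((exchangeGraph M h).neighborSet v).ncard ≤ d) →
        (d : ℝ) < (M : ℝ) ^ (2 * h) / 2 ^ h →
        (({p : Fin (M ^ (2 * h + 1) + 1) → Equiv.Perm (Fin M) |
              ∀ i : Fin (M ^ (2 * h + 1)),
                (exchangeGraph M h).Adj (p i.castSucc) (p i.succ)}.ncard : ℝ)
            < ((Nat.factorial M : ℝ) / 2 ^ h) * (M : ℝ) ^ (2 * h * M ^ (2 * h + 1))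
          ∧ ({p : Fin (M ^ (2 * h + 1) + 1) → Equiv.Perm (Fin M) |
                ∀ i : Fin (M ^ (2 * h + 1)),
                  (exchangeGraph M h).Adj (p i.castSucc) (p i.succ)}.ncard : ℝ)
              < Nat.factorial (M ^ (2 * h + 1))
          ∧ ∀ f : Equiv.Perm (Fin M) → ℝ, Function.Injective f →
              (∑ τ : Equiv.Perm (Equiv.Perm (Fin M)),
                  ({p : Fin (M ^ (2 * h + 1) + 1) → Equiv.Perm (Fin M) |
                      (∀ i : Fin (M ^ (2 * h + 1)),
                        (exchangeGraph M h).Adj (p i.castSucc) (p i.succ)) ∧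
                      ∀ i j : Fin (M ^ (2 * h + 1) + 1), i < j → f (τ (p j)) < f (τ (p i))}.ncard : ℝ))
                / (Fintype.card (Equiv.Perm (Equiv.Perm (Fin M)))) < 1) := by
  refine ⟨9, fun M hM9 hM2 d hdeg hdlt => ?_⟩
  set G := exchangeGraph M h with hG
  set L := M ^ (2 * h + 1) with hL
  clear_value G L
  have hLpos : 0 < L := by rw [hL]; positivity
  have hML : 2 * M < L := by
    have h3 : M ^ 3 ≤ L := by
      rw [hL]; exact Nat.pow_le_pow_right (by omega) (by omega)
    have h5 : 9 * 9 ≤ M * M := Nat.mul_le_mul hM9 hM9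
    have h4 : 2 * M < M ^ 3 := by
      calc 2 * M < 81 * M := by omega
        _ ≤ M * M * M := Nat.mul_le_mul_right _ (by omega)
        _ = M ^ 3 := by ring
    omega
  have hLne : L ≠ 0 := by omega
  have hMpos : 0 < M := by omega
  have hexp : L < 2 * (L - M) := by omega
  have hadd : ∀ Kk : ℕ, 2 * M < L → Kk + L = M + Kk + (L - M) := fun Kk hx => by omega
  -- walk set as a finset
  set Wf := Finset.univ.filter (fun p : Fin (L + 1) → Equiv.Perm (Fin M) =>
      ∀ i : Fin L, G.Adj (p i.castSucc) (p i.succ)) with hWf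
  have hWncard : ({p : Fin (L + 1) → Equiv.Perm (Fin M) |
      ∀ i : Fin L, G.Adj (p i.castSucc) (p i.succ)}).ncard = Wf.card := by
    have hst : {p : Fin (L + 1) → Equiv.Perm (Fin M) |
        ∀ i : Fin L, G.Adj (p i.castSucc) (p i.succ)} = ↑Wf := by
      ext p; simp [hWf]
    rw [hst, Set.ncard_coe_finset]
  have hWle : Wf.card ≤ M.factorial * d ^ L := by
    have := walk_count_le' G d hdeg L
    rwa [Fintype.card_perm, Fintype.card_fin] at this
  clear_value Wf
  -- basic positivity
  have hMR : (2 : ℝ) ≤ (M : ℝ) := by exact_mod_cast hM2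
  have hfacpos : (0 : ℝ) < (M.factorial : ℝ) := by exact_mod_cast M.factorial_pos
  -- Part 1
  have part1 : (Wf.card : ℝ) < ((M.factorial : ℝ) / 2 ^ h) * (M : ℝ) ^ (2 * h * L) := by
    have c1 : (Wf.card : ℝ) ≤ (M.factorial : ℝ) * (d : ℝ) ^ L := by exact_mod_cast hWle
    have c2 : (M.factorial : ℝ) * (d : ℝ) ^ L
        < (M.factorial : ℝ) * ((M : ℝ) ^ (2 * h) / 2 ^ h) ^ L := by
      apply mul_lt_mul_of_pos_left _ hfacpos
      exact pow_lt_pow_left₀ hdlt (by positivity) hLne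
    have c3 : ((M : ℝ) ^ (2 * h) / 2 ^ h) ^ L = (M : ℝ) ^ (2 * h * L) / 2 ^ (h * L) := by
      rw [div_pow, ← pow_mul, ← pow_mul]
    have c4 : (M.factorial : ℝ) * ((M : ℝ) ^ (2 * h * L) / 2 ^ (h * L))
        ≤ ((M.factorial : ℝ) / 2 ^ h) * (M : ℝ) ^ (2 * h * L) := by
      rw [mul_div_assoc', div_mul_eq_mul_div]
      gcongr
      · exact one_le_two
      · exact Nat.le_mul_of_pos_right h hLpos
    calc (Wf.card : ℝ) ≤ (M.factorial : ℝ) * (d : ℝ) ^ L := c1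
      _ < (M.factorial : ℝ) * ((M : ℝ) ^ (2 * h) / 2 ^ h) ^ L := c2
      _ = (M.factorial : ℝ) * ((M : ℝ) ^ (2 * h * L) / 2 ^ (h * L)) := by rw [c3]
      _ ≤ ((M.factorial : ℝ) / 2 ^ h) * (M : ℝ) ^ (2 * h * L) := c4
  -- Part 2
  have part2 : (Wf.card : ℝ) < (L.factorial : ℝ) := by
    have d1 : ((M.factorial : ℝ) / 2 ^ h) * (M : ℝ) ^ (2 * h * L)
        ≤ (M : ℝ) ^ M * (M : ℝ) ^ (2 * h * L) := by
      gcongr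
      calc (M.factorial : ℝ) / 2 ^ h ≤ (M.factorial : ℝ) := by
            apply div_le_self (le_of_lt hfacpos)
            exact_mod_cast Nat.one_le_two_pow
        _ ≤ (M : ℝ) ^ M := by exact_mod_cast Nat.factorial_le_pow M
    have d2 : (M : ℝ) ^ M * (M : ℝ) ^ (2 * h * L) = (M : ℝ) ^ (M + 2 * h * L) := by
      rw [pow_add]
    have hnat : M ^ (M + 2 * h * L) * 3 ^ L < L ^ L := by
      have e1 : L ^ L = M ^ (M + 2 * h * L) * M ^ (L - M) := by
        have e0 : L ^ L = (M ^ (2 * h + 1)) ^ L := by rw [← hL]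
        rw [e0, ← pow_mul, ← pow_add]
        congr 1
        have h1 : (2 * h + 1) * L = 2 * h * L + L := by ring
        rw [h1]
        exact hadd (2 * h * L) hML
      rw [e1]
      apply mul_lt_mul_of_pos_left _ (pow_pos hMpos _)
      calc 3 ^ L < 3 ^ (2 * (L - M)) := Nat.pow_lt_pow_right (by norm_num) hexp
        _ = 9 ^ (L - M) := by rw [pow_mul]; norm_num
        _ ≤ M ^ (L - M) := Nat.pow_le_pow_left hM9 _
    have d3 : (M : ℝ) ^ (M + 2 * h * L) < ((L : ℝ) / 3) ^ L := by
      rw [div_pow, lt_div_iff₀ (by positivity)]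
      exact_mod_cast hnat
    calc (Wf.card : ℝ) < ((M.factorial : ℝ) / 2 ^ h) * (M : ℝ) ^ (2 * h * L) := part1
      _ ≤ (M : ℝ) ^ M * (M : ℝ) ^ (2 * h * L) := d1
      _ = (M : ℝ) ^ (M + 2 * h * L) := d2
      _ < ((L : ℝ) / 3) ^ L := d3
      _ ≤ (L.factorial : ℝ) := div_three_pow_le_factorial L
  refine ⟨by rw [hWncard]; exact part1, by rw [hWncard]; exact part2, ?_⟩
  -- Part 3
  intro f hf
  set K := Fintype.card (Equiv.Perm (Equiv.Perm (Fin M))) with hK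
  clear_value K
  have hKpos : 0 < K := by rw [hK]; exact Fintype.card_pos
  set Df : Equiv.Perm (Equiv.Perm (Fin M)) → Finset (Fin (L + 1) → Equiv.Perm (Fin M)) :=
    fun τ => Finset.univ.filter (fun p => (∀ i : Fin L, G.Adj (p i.castSucc) (p i.succ)) ∧
      ∀ i j : Fin (L + 1), i < j → f (τ (p j)) < f (τ (p i))) with hDf
  clear_value Df
  have hDset : ∀ τ : Equiv.Perm (Equiv.Perm (Fin M)),
      ({p : Fin (L + 1) → Equiv.Perm (Fin M) |
        (∀ i : Fin L, G.Adj (p i.castSucc) (p i.succ)) ∧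
        ∀ i j : Fin (L + 1), i < j → f (τ (p j)) < f (τ (p i))}).ncard = (Df τ).card := by
    intro τ
    have hst : {p : Fin (L + 1) → Equiv.Perm (Fin M) |
        (∀ i : Fin L, G.Adj (p i.castSucc) (p i.succ)) ∧
        ∀ i j : Fin (L + 1), i < j → f (τ (p j)) < f (τ (p i))} = ↑(Df τ) := by
      ext p; simp [hDf]
    rw [hst, Set.ncard_coe_finset]
  have hsum : (∑ τ : Equiv.Perm (Equiv.Perm (Fin M)), (Df τ).card) * (L + 1).factorial
      ≤ Wf.card * K := by
    have hswap : (∑ τ : Equiv.Perm (Equiv.Perm (Fin M)), (Df τ).card)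
        = ∑ p : Fin (L + 1) → Equiv.Perm (Fin M),
          (Finset.univ.filter fun τ : Equiv.Perm (Equiv.Perm (Fin M)) =>
            (∀ i : Fin L, G.Adj (p i.castSucc) (p i.succ)) ∧
            ∀ i j : Fin (L + 1), i < j → f (τ (p j)) < f (τ (p i))).card := by
      simp_rw [hDf, Finset.card_filter]
      exact Finset.sum_comm
    rw [hswap, Finset.sum_mul]
    have hterm : ∀ p : Fin (L + 1) → Equiv.Perm (Fin M),
        (Finset.univ.filter fun τ : Equiv.Perm (Equiv.Perm (Fin M)) =>
            (∀ i : Fin L, G.Adj (p i.castSucc) (p i.succ)) ∧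
            ∀ i j : Fin (L + 1), i < j → f (τ (p j)) < f (τ (p i))).card * (L + 1).factorial
          ≤ (if (∀ i : Fin L, G.Adj (p i.castSucc) (p i.succ)) then 1 else 0) * K := by
      intro p
      by_cases hw : ∀ i : Fin L, G.Adj (p i.castSucc) (p i.succ)
      · rw [if_pos hw, one_mul]
        have hsub : (Finset.univ.filter fun τ : Equiv.Perm (Equiv.Perm (Fin M)) =>
              (∀ i : Fin L, G.Adj (p i.castSucc) (p i.succ)) ∧
              ∀ i j : Fin (L + 1), i < j → f (τ (p j)) < f (τ (p i)))
            ⊆ (Finset.univ.filter fun τ : Equiv.Perm (Equiv.Perm (Fin M)) =>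
              ∀ i j : Fin (L + 1), i < j → f (τ (p j)) < f (τ (p i))) := by
          intro τ hτ
          rw [Finset.mem_filter] at hτ ⊢
          exact ⟨hτ.1, hτ.2.2⟩
        calc _ ≤ (Finset.univ.filter fun τ : Equiv.Perm (Equiv.Perm (Fin M)) =>
              ∀ i j : Fin (L + 1), i < j → f (τ (p j)) < f (τ (p i))).card * (L + 1).factorial :=
              Nat.mul_le_mul_right _ (Finset.card_le_card hsub)
          _ ≤ K := by rw [hK]; exact decreasing_perm_count f hf p
      · rw [if_neg hw, zero_mul]
        have hempty : (Finset.univ.filter fun τ : Equiv.Perm (Equiv.Perm (Fin M)) =>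
            (∀ i : Fin L, G.Adj (p i.castSucc) (p i.succ)) ∧
            ∀ i j : Fin (L + 1), i < j → f (τ (p j)) < f (τ (p i))) = ∅ := by
          apply Finset.filter_false_of_mem
          intro τ _
          intro hcon
          exact hw hcon.1
        rw [hempty]
        simp
    calc (∑ p : Fin (L + 1) → Equiv.Perm (Fin M),
          (Finset.univ.filter fun τ : Equiv.Perm (Equiv.Perm (Fin M)) =>
            (∀ i : Fin L, G.Adj (p i.castSucc) (p i.succ)) ∧
            ∀ i j : Fin (L + 1), i < j → f (τ (p j)) < f (τ (p i))).card * (L + 1).factorial)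
        ≤ ∑ p : Fin (L + 1) → Equiv.Perm (Fin M),
            (if (∀ i : Fin L, G.Adj (p i.castSucc) (p i.succ)) then 1 else 0) * K :=
          Finset.sum_le_sum (fun p _ => hterm p)
      _ = (∑ p : Fin (L + 1) → Equiv.Perm (Fin M),
            (if (∀ i : Fin L, G.Adj (p i.castSucc) (p i.succ)) then 1 else 0)) * K := by
          rw [← Finset.sum_mul]
      _ = Wf.card * K := by rw [hWf, Finset.card_filter]
  -- conclude
  have hWltL : Wf.card < L.factorial := by exact_mod_cast part2
  have hSK : (∑ τ : Equiv.Perm (Equiv.Perm (Fin M)), (Df τ).card) < K := by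
    have h1 : Wf.card * K < L.factorial * K := (Nat.mul_lt_mul_right hKpos).mpr hWltL
    have h2 : L.factorial * K ≤ (L + 1).factorial * K :=
      Nat.mul_le_mul_right _ (Nat.factorial_le (Nat.le_succ L))
    have h3 := lt_of_le_of_lt hsum (lt_of_lt_of_le h1 h2)
    have h4 : (∑ τ : Equiv.Perm (Equiv.Perm (Fin M)), (Df τ).card) * (L + 1).factorial
        < K * (L + 1).factorial := by
      calc _ < (L + 1).factorial * K := h3
        _ = K * (L + 1).factorial := Nat.mul_comm _ _
    exact lt_of_mul_lt_mul_right h4 (Nat.zero_le _)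
  simp only [hDset]
  rw [div_lt_one (by exact_mod_cast hKpos)]
  exact_mod_cast hSK
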